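/- Let d ≥ 2 and τ ∈ (0, 1/2]. There exists γ < ∞, depending only on d and τ, with the following property: for any t ∈ [τ, 1−τ] and any pair of nonempty Borel sets A, B ⊆ ℝ^d satisfying |A| ≥ 1/2, |B| ≥ 1/2, and |tA + (1−t)B| ≤ 2, there exists a Lebesgue-measure-preserving invertible linear map φ : ℝ^d → ℝ^d such that the images φ(A) and φ(B) are both γ-normalized. -/

import Mathlib

open MeasureTheory Set Pointwise Filter ENNReal

noncomputable section

abbrev Edim (n : ℕ) := EuclideanSpace ℝ (Fin n)

/-- We identify `ℝ^d` with `ℝ^{d-1} × ℝ`. -/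
abbrev Sp (n : ℕ) := Edim n × ℝ

/-- The vertical slice `A_x ⊆ ℝ` of a set `A ⊆ ℝ^{n} × ℝ`. -/
def vslice {n : ℕ} (A : Set (Sp n)) (x : Edim n) : Set ℝ := {y | (x, y) ∈ A}

/-- The horizontal slice of `A ⊆ ℝ^n × ℝ` at height `t`. -/
def hslice {n : ℕ} (A : Set (Sp n)) (t : ℝ) : Set (Edim n) := {x | (x, t) ∈ A}

/-- Steiner symmetrization `A^⋆`: the slice `(A^⋆)_x` is the open interval
`(-|A_x|/2, |A_x|/2)` centered at `0` of length `|A_x|` (empty if `|A_x| = 0`). -/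
def steiner {n : ℕ} (A : Set (Sp n)) : Set (Sp n) :=
  {p | ENNReal.ofReal (2 * |p.2|) < volume (vslice A p.1)}

/-- Schwarz symmetrization `A^*`: the horizontal slice of `A^*` at height `t` is the open
ball in `ℝ^n` centered at `0` whose measure equals that of the corresponding slice of `A`. -/
def schwarz {n : ℕ} (A : Set (Sp n)) : Set (Sp n) :=
  {p | volume (Metric.ball (0 : Edim n) ‖p.1‖) < volume (hslice A p.2)}

/-- The symmetrization `A^♮ = (A^⋆)^*`. -/
def natSymm {n : ℕ} (A : Set (Sp n)) : Set (Sp n) := schwarz (steiner A)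


/-- A Borel set `A ⊆ ℝ^{d-1} × ℝ` is `γ`-normalized if `|A| ≥ γ⁻¹`,
`sup_x |A_x| ≤ γ`, and `|π(A)| ≤ γ`. -/
def IsNormalized {n : ℕ} (γ : ℝ) (A : Set (Sp n)) : Prop :=
  ENNReal.ofReal γ⁻¹ ≤ volume A ∧
  (⨆ x : Edim n, volume (vslice A x)) ≤ ENNReal.ofReal γ ∧
  volume (Prod.fst '' A) ≤ ENNReal.ofReal γ

/-! ### Auxiliary material for the proof -/

lemma vslice_preimage' {n : ℕ} (A : Set (Sp n)) (x : Edim n) :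
    vslice A x = Prod.mk x ⁻¹' A := rfl

/-- A scaling linear equivalence on a real vector space. -/
def smulEquiv (E : Type*) [AddCommGroup E] [Module ℝ E] (c : ℝ) (hc : c ≠ 0) : E ≃ₗ[ℝ] E where
  toFun := fun x => c • x
  invFun := fun x => c⁻¹ • x
  map_add' := fun x y => smul_add c x y
  map_smul' := fun r x => smul_comm c r x
  left_inv := fun x => inv_smul_smul₀ hc x
  right_inv := fun x => smul_inv_smul₀ hc x

/-- The anisotropic scaling `(x, y) ↦ (c₁ • x, c₂ • y)` as a linear equivalence. -/
def prodScale (n : ℕ) (c₁ c₂ : ℝ) (h₁ : c₁ ≠ 0) (h₂ : c₂ ≠ 0) : Sp n ≃ₗ[ℝ] Sp n :=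
  (smulEquiv (Edim n) c₁ h₁).prodCongr (smulEquiv ℝ c₂ h₂)

lemma measurable_prodScale (n : ℕ) (c₁ c₂ : ℝ) (h₁ : c₁ ≠ 0) (h₂ : c₂ ≠ 0) :
    Measurable (prodScale n c₁ c₂ h₁ h₂) :=
  ((measurable_const_smul c₁).comp measurable_fst).prodMk
    ((measurable_const_smul c₂).comp measurable_snd)

lemma prodScale_mp (n : ℕ) (c₁ c₂ : ℝ) (h₁ : c₁ ≠ 0) (h₂ : c₂ ≠ 0)
    (h : ENNReal.ofReal (|c₁| ^ n) * ENNReal.ofReal |c₂| = 1) :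
    MeasurePreserving (prodScale n c₁ c₂ h₁ h₂) volume volume := by
  have habs1 : (0:ℝ) < |c₁| ^ n := by positivity
  have habs2 : (0:ℝ) < |c₂| := abs_pos.2 h₂
  refine ⟨measurable_prodScale n c₁ c₂ h₁ h₂, ?_⟩
  rw [Measure.volume_eq_prod]
  refine ((Measure.prod_eq ?_).symm)
  intro s t hs ht
  rw [Measure.map_apply (measurable_prodScale n c₁ c₂ h₁ h₂) (hs.prod ht)]
  have hpre : (prodScale n c₁ c₂ h₁ h₂) ⁻¹' (s ×ˢ t)
      = ((c₁ • ·) ⁻¹' s) ×ˢ ((c₂ • ·) ⁻¹' t) := rfl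
  rw [hpre, Measure.prod_prod, Measure.addHaar_preimage_smul volume h₁,
    Measure.addHaar_preimage_smul volume h₂, finrank_euclideanSpace_fin,
    Module.finrank_self, pow_one]
  have e1 : ENNReal.ofReal |(c₁ ^ n)⁻¹| = (ENNReal.ofReal (|c₁| ^ n))⁻¹ := by
    rw [abs_inv, abs_pow, ENNReal.ofReal_inv_of_pos habs1]
  have e2 : ENNReal.ofReal |c₂⁻¹| = (ENNReal.ofReal |c₂|)⁻¹ := by
    rw [abs_inv, ENNReal.ofReal_inv_of_pos habs2]
  rw [e1, e2]
  have hx : (ENNReal.ofReal (|c₁| ^ n))⁻¹ * (ENNReal.ofReal |c₂|)⁻¹ = 1 := by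
    rw [← ENNReal.mul_inv (Or.inl (ENNReal.ofReal_pos.2 habs1).ne')
      (Or.inl ENNReal.ofReal_ne_top), h, inv_one]
  calc (ENNReal.ofReal (|c₁| ^ n))⁻¹ * volume s * ((ENNReal.ofReal |c₂|)⁻¹ * volume t)
      = (ENNReal.ofReal (|c₁| ^ n))⁻¹ * (ENNReal.ofReal |c₂|)⁻¹ * (volume s * volume t) := by
        ring
    _ = volume s * volume t := by rw [hx, one_mul]

/-- Key cross bound: `t sⁿ |A_{x₀}| |π(B)| ≤ |t•A + s•B| ≤ 2`. -/
lemma cross_bound {n : ℕ} (A B : Set (Sp n)) {t s : ℝ} (ht : 0 < t) (hs : 0 < s)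
    (hS : volume (t • A + s • B) ≤ 2) (x₀ : Edim n) :
    ENNReal.ofReal (t * s ^ n) * (volume (vslice A x₀) * volume (Prod.fst '' B)) ≤ 2 := by
  obtain ⟨G, hG, hGm, hGv⟩ := exists_measurable_superset volume (t • A + s • B)
  have hGvol : volume G ≤ 2 := by rw [hGv]; exact hS
  set c : ℝ≥0∞ := ENNReal.ofReal t * volume (vslice A x₀) with hc
  set U : Set (Edim n) := {x | c ≤ volume (vslice G x)} with hU
  have hGsl : Measurable fun x : Edim n => volume (vslice G x) := by
    simp only [vslice_preimage']
    exact measurable_measure_prodMk_left hGm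
  have hUm : MeasurableSet U := measurableSet_le measurable_const hGsl
  have hsub : (t • x₀) +ᵥ (s • (Prod.fst '' B)) ⊆ U := by
    rintro u hu
    obtain ⟨v, hv, rfl⟩ := hu
    obtain ⟨w, hw, rfl⟩ := hv
    obtain ⟨pr, hpr, rfl⟩ := hw
    have hsl : (s * pr.2) +ᵥ (t • vslice A x₀) ⊆ vslice G (t • x₀ +ᵥ s • pr.1) := by
      rintro z hz
      obtain ⟨z', hz', rfl⟩ := hz
      obtain ⟨u', hu', rfl⟩ := hz'
      have hmem : t • ((x₀, u') : Sp n) + s • (pr.1, pr.2) ∈ t • A + s • B :=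
        add_mem_add (smul_mem_smul_set hu') (smul_mem_smul_set (by simpa using hpr))
      have hGmem : ((t • x₀ +ᵥ s • pr.1, t • u' + s * pr.2) : Sp n) ∈ G := by
        apply hG
        have heq : ((t • x₀ +ᵥ s • pr.1, t • u' + s * pr.2) : Sp n)
            = t • ((x₀, u') : Sp n) + s • (pr.1, pr.2) := rfl
        rw [heq]; exact hmem
      show (s * pr.2 + t • u') ∈ vslice G _
      have hcomm : s * pr.2 + t • u' = t • u' + s * pr.2 := add_comm _ _
      rw [hcomm]
      exact hGmem
    show c ≤ volume (vslice G (t • x₀ +ᵥ s • pr.1))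
    calc c = volume ((s * pr.2) +ᵥ (t • vslice A x₀)) := by
            rw [measure_vadd, Measure.addHaar_smul_of_nonneg volume ht.le,
              Module.finrank_self, pow_one]
      _ ≤ volume (vslice G (t • x₀ +ᵥ s • pr.1)) := measure_mono hsl
  have hUvol : ENNReal.ofReal (s ^ n) * volume (Prod.fst '' B) ≤ volume U := by
    calc ENNReal.ofReal (s ^ n) * volume (Prod.fst '' B)
        = volume ((t • x₀) +ᵥ (s • (Prod.fst '' B))) := by
          rw [measure_vadd, Measure.addHaar_smul_of_nonneg volume hs.le,
            finrank_euclideanSpace_fin]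
      _ ≤ volume U := measure_mono hsub
  have hint : c * volume U ≤ 2 := by
    calc c * volume U = ∫⁻ _x in U, c := (setLIntegral_const U c).symm
      _ ≤ ∫⁻ x in U, volume (vslice G x) := setLIntegral_mono hGsl (fun x hx => hx)
      _ ≤ ∫⁻ x, volume (vslice G x) := setLIntegral_le_lintegral U _
      _ = volume G := by rw [Measure.volume_eq_prod, Measure.prod_apply hGm]; rfl
      _ ≤ 2 := hGvol
  calc ENNReal.ofReal (t * s ^ n) * (volume (vslice A x₀) * volume (Prod.fst '' B))
      = c * (ENNReal.ofReal (s ^ n) * volume (Prod.fst '' B)) := by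
        rw [hc, ENNReal.ofReal_mul ht.le]; ring
    _ ≤ c * volume U := by gcongr
    _ ≤ 2 := hint

/-- Fubini upper bound : `|X| ≤ (sup-slice X) * |π X|`. -/
lemma vol_le_slice_mul_proj {n : ℕ} (X : Set (Sp n)) (hX : MeasurableSet X) :
    volume X ≤ (⨆ x, volume (vslice X x)) * volume (Prod.fst '' X) := by
  obtain ⟨Hp, hsub, hHm, hHv⟩ := exists_measurable_superset volume (Prod.fst '' X)
  set a := ⨆ x, volume (vslice X x) with ha
  have hbd : ∀ x, volume (vslice X x) ≤ Hp.indicator (fun _ => a) x := by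
    intro x
    by_cases hx : x ∈ Hp
    · rw [indicator_of_mem hx]; exact le_iSup (fun x => volume (vslice X x)) x
    · rw [indicator_of_notMem hx]
      have hempty : vslice X x = ∅ := by
        ext y; simp only [mem_empty_iff_false, iff_false]
        intro hy
        exact hx (hsub ⟨(x, y), hy, rfl⟩)
      simp [hempty]
  calc volume X = ∫⁻ x, volume (vslice X x) := by
        rw [Measure.volume_eq_prod, Measure.prod_apply hX]; rfl
    _ ≤ ∫⁻ x, Hp.indicator (fun _ => a) x := lintegral_mono hbd
    _ = a * volume Hp := lintegral_indicator_const hHm a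
    _ = a * volume (Prod.fst '' X) := by rw [hHv]
/-- There is `γ < ∞`, depending only on `d` and `τ`, such that for all `t ∈ [τ, 1-τ]` and
nonempty Borel `A, B ⊆ ℝ^d` with `|A|, |B| ≥ 1/2` and `|tA + (1-t)B| ≤ 2`, there is a
measure-preserving invertible linear map `φ` such that `φ(A)` and `φ(B)` are `γ`-normalized. -/
theorem exists_normalizing_linear_map
    (d : ℕ) (hd : 2 ≤ d) (τ : ℝ) (hτ : τ ∈ Set.Ioc (0:ℝ) (1/2)) :
    ∃ γ : ℝ, 1 ≤ γ ∧
      ∀ t ∈ Set.Icc τ (1 - τ), ∀ A B : Set (Sp (d-1)),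
        MeasurableSet A → MeasurableSet B → A.Nonempty → B.Nonempty →
        ENNReal.ofReal (1/2) ≤ volume A → ENNReal.ofReal (1/2) ≤ volume B →
        volume (t • A + (1-t) • B) ≤ 2 →
        ∃ φ : Sp (d-1) ≃ₗ[ℝ] Sp (d-1),
          MeasurePreserving φ volume volume ∧
          IsNormalized γ (φ '' A) ∧ IsNormalized γ (φ '' B) := by
  set n := d - 1 with hn
  have hn1 : 1 ≤ n := by omega
  have hdn : d = n + 1 := by omega
  obtain ⟨hτ0, hτ2⟩ := hτ
  have hτd0 : (0:ℝ) < τ ^ d := by positivity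
  have hτd1 : τ ^ d ≤ 1 := pow_le_one₀ hτ0.le (by linarith)
  set γ : ℝ := (τ^d)⁻¹ * ((τ^d)⁻¹ * 8) with hγ
  have hτdinv : (1:ℝ) ≤ (τ^d)⁻¹ := by
    have h := mul_inv_cancel₀ hτd0.ne'
    nlinarith [inv_pos.2 hτd0]
  have hγ8 : (8:ℝ) ≤ γ := by nlinarith
  have hγ1 : (1:ℝ) ≤ γ := by linarith
  have hγpos : (0:ℝ) < γ := by linarith
  refine ⟨γ, hγ1, ?_⟩
  intro t hT A B hA hB _hAne _hBne hvA hvB hS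
  obtain ⟨hTl, hTr⟩ := hT
  have ht0 : 0 < t := lt_of_lt_of_le hτ0 hTl
  have hs0 : 0 < 1 - t := lt_of_lt_of_le hτ0 (by linarith)
  set a := ⨆ x, volume (vslice A x) with haDef
  set b := ⨆ x, volume (vslice B x) with hbDef
  set p := volume (Prod.fst '' A) with hpDef
  set q := volume (Prod.fst '' B) with hqDef
  set e : ℝ≥0∞ := ENNReal.ofReal (τ ^ d) with heDef
  have he0 : e ≠ 0 := (ENNReal.ofReal_pos.2 hτd0).ne'
  have heT : e ≠ ⊤ := ENNReal.ofReal_ne_top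
  have he1 : e ≤ 1 := by
    rw [heDef, ← ENNReal.ofReal_one]; exact ENNReal.ofReal_le_ofReal hτd1
  have heinv : (1:ℝ≥0∞) ≤ e⁻¹ := by
    rw [ENNReal.le_inv_iff_mul_le, one_mul]; exact he1
  set Γ : ℝ≥0∞ := e⁻¹ * (e⁻¹ * 8) with hΓDef
  have hγΓ : ENNReal.ofReal γ = Γ := by
    rw [hγ, ENNReal.ofReal_mul (by positivity), ENNReal.ofReal_mul (by positivity),
      ENNReal.ofReal_inv_of_pos hτd0, hΓDef, ← heDef]
    norm_num
  have hdiv : ∀ x y : ℝ≥0∞, e * x ≤ y → x ≤ e⁻¹ * y := by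
    intro x y hxy
    calc x = e⁻¹ * (e * x) := by
          rw [← mul_assoc, ENNReal.inv_mul_cancel he0 heT, one_mul]
      _ ≤ e⁻¹ * y := by gcongr
  -- cross bounds
  have haq : e * (a * q) ≤ 2 := by
    have hτle : τ ^ d ≤ t * (1-t)^n := by
      have h2 : τ ≤ 1 - t := by linarith
      calc τ ^ d = τ * τ ^ n := by rw [hdn]; ring
        _ ≤ t * (1-t)^n :=
          mul_le_mul hTl (pow_le_pow_left₀ hτ0.le h2 n) (by positivity) ht0.le
    have hkey : ENNReal.ofReal (t * (1-t)^n) * (a * q) ≤ 2 := by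
      rw [haDef, ENNReal.iSup_mul, ENNReal.mul_iSup]
      exact iSup_le fun x₀ => cross_bound A B ht0 hs0 hS x₀
    calc e * (a * q) ≤ ENNReal.ofReal (t * (1-t)^n) * (a * q) := by
          gcongr
          exact ENNReal.ofReal_le_ofReal hτle
      _ ≤ 2 := hkey
  have hbp : e * (b * p) ≤ 2 := by
    have hS' : volume ((1-t) • B + t • A) ≤ 2 := by rwa [add_comm] at hS
    have hτle : τ ^ d ≤ (1-t) * t^n := by
      have h2 : τ ≤ 1 - t := by linarith
      calc τ ^ d = τ * τ ^ n := by rw [hdn]; ring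
        _ ≤ (1-t) * t^n :=
          mul_le_mul h2 (pow_le_pow_left₀ hτ0.le hTl n) (by positivity) hs0.le
    have hkey : ENNReal.ofReal ((1-t) * t^n) * (b * p) ≤ 2 := by
      rw [hbDef, ENNReal.iSup_mul, ENNReal.mul_iSup]
      exact iSup_le fun x₀ => cross_bound B A hs0 ht0 hS' x₀
    calc e * (b * p) ≤ ENNReal.ofReal ((1-t) * t^n) * (b * p) := by
          gcongr
          exact ENNReal.ofReal_le_ofReal hτle
      _ ≤ 2 := hkey
  -- Fubini lower bounds
  have half : ENNReal.ofReal (1/2 : ℝ) = 2⁻¹ := by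
    rw [show (1/2:ℝ) = 2⁻¹ by norm_num, ENNReal.ofReal_inv_of_pos two_pos]
    norm_num
  have hap2 : (2:ℝ≥0∞)⁻¹ ≤ a * p := by
    rw [← half]; exact le_trans hvA (vol_le_slice_mul_proj A hA)
  have hbq2 : (2:ℝ≥0∞)⁻¹ ≤ b * q := by
    rw [← half]; exact le_trans hvB (vol_le_slice_mul_proj B hB)
  -- nondegeneracy
  have hq0 : q ≠ 0 := by
    intro h; rw [h, mul_zero] at hbq2; simp at hbq2
  have hp0 : p ≠ 0 := by
    intro h; rw [h, mul_zero] at hap2; simp at hap2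
  have ha0 : a ≠ 0 := by
    intro h; rw [h, zero_mul] at hap2; simp at hap2
  have hb0 : b ≠ 0 := by
    intro h; rw [h, zero_mul] at hbq2; simp at hbq2
  have haT : a ≠ ⊤ := by
    intro h
    rw [h, ENNReal.top_mul hq0, ENNReal.mul_top he0] at haq
    simp at haq
  have hbT : b ≠ ⊤ := by
    intro h
    rw [h, ENNReal.top_mul hp0, ENNReal.mul_top he0] at hbp
    simp at hbp
  set l := max a b with hlDef
  have hl0 : l ≠ 0 := by
    intro h
    exact ha0 (le_antisymm (le_trans (le_max_left a b) h.le) zero_le)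
  have hlT : l ≠ ⊤ := (max_lt haT.lt_top hbT.lt_top).ne
  have hlpos : 0 < l.toReal := ENNReal.toReal_pos hl0 hlT
  have hofl : ENNReal.ofReal l.toReal = l := ENNReal.ofReal_toReal hlT
  -- all four products bounded by Γ
  have key1 : ∀ x : ℝ≥0∞, e * x ≤ 2 → x ≤ Γ := by
    intro x hx
    calc x ≤ e⁻¹ * 2 := hdiv x 2 hx
      _ ≤ e⁻¹ * (e⁻¹ * 8) := by
          gcongr
          calc (2:ℝ≥0∞) = 1 * 2 := (one_mul _).symm
            _ ≤ e⁻¹ * 8 := mul_le_mul' heinv (by norm_num)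
      _ = Γ := rfl
  have haqΓ : a * q ≤ Γ := key1 _ haq
  have hbpΓ : b * p ≤ Γ := key1 _ hbp
  have hhalf2 : (1:ℝ≥0∞) = 2⁻¹ * 2 := by
    rw [ENNReal.inv_mul_cancel (by norm_num) (by norm_num)]
  have hapΓ : a * p ≤ Γ := by
    have hX : e * (e * (a * p)) ≤ 8 := by
      have h48 : (e * (a*q)) * (e * (b*p)) ≤ 4 := by
        calc (e * (a*q)) * (e * (b*p)) ≤ 2 * 2 := mul_le_mul' haq hbp
          _ = 4 := by norm_num
      calc e * (e * (a*p)) = (e * (e * (a*p))) * 1 := (mul_one _).symm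
        _ = ((e * (e * (a*p))) * 2⁻¹) * 2 := by rw [hhalf2, ← mul_assoc]
        _ ≤ ((e * (e * (a*p))) * (b*q)) * 2 := by gcongr
        _ = ((e * (a*q)) * (e * (b*p))) * 2 := by ring_nf
        _ ≤ 4 * 2 := by gcongr
        _ = 8 := by norm_num
    exact hdiv _ _ (hdiv _ _ hX)
  have hbqΓ : b * q ≤ Γ := by
    have hX : e * (e * (b * q)) ≤ 8 := by
      have h48 : (e * (a*q)) * (e * (b*p)) ≤ 4 := by
        calc (e * (a*q)) * (e * (b*p)) ≤ 2 * 2 := mul_le_mul' haq hbp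
          _ = 4 := by norm_num
      calc e * (e * (b*q)) = (e * (e * (b*q))) * 1 := (mul_one _).symm
        _ = ((e * (e * (b*q))) * 2⁻¹) * 2 := by rw [hhalf2, ← mul_assoc]
        _ ≤ ((e * (e * (b*q))) * (a*p)) * 2 := by gcongr
        _ = ((e * (a*q)) * (e * (b*p))) * 2 := by ring_nf
        _ ≤ 4 * 2 := by gcongr
        _ = 8 := by norm_num
    exact hdiv _ _ (hdiv _ _ hX)
  have hlp : l * p ≤ Γ := by
    rcases max_cases a b with ⟨h1, _⟩ | ⟨h1, _⟩
    · rw [hlDef, h1]; exact hapΓ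
    · rw [hlDef, h1]; exact hbpΓ
  have hlq : l * q ≤ Γ := by
    rcases max_cases a b with ⟨h1, _⟩ | ⟨h1, _⟩
    · rw [hlDef, h1]; exact haqΓ
    · rw [hlDef, h1]; exact hbqΓ
  -- the normalizing map
  set c₁ : ℝ := l.toReal ^ ((n:ℝ)⁻¹) with hc₁def
  have hc₁pos : 0 < c₁ := Real.rpow_pos_of_pos hlpos _
  have hc₂pos : 0 < l.toReal⁻¹ := inv_pos.2 hlpos
  have hncast : ((n:ℝ)) ≠ 0 := Nat.cast_ne_zero.2 (by omega)
  have hc₁n : c₁ ^ n = l.toReal := by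
    rw [hc₁def, ← Real.rpow_natCast (l.toReal ^ ((n:ℝ)⁻¹)) n, ← Real.rpow_mul hlpos.le,
      inv_mul_cancel₀ hncast, Real.rpow_one]
  set φ := prodScale n c₁ l.toReal⁻¹ hc₁pos.ne' hc₂pos.ne' with hφdef
  have hmp : MeasurePreserving φ volume volume := by
    apply prodScale_mp
    rw [abs_of_pos hc₁pos, abs_of_pos hc₂pos, hc₁n, ENNReal.ofReal_inv_of_pos hlpos, hofl,
      ENNReal.mul_inv_cancel hl0 hlT]
  have hmps : MeasurePreserving (⇑φ.symm) volume volume := by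
    have h := prodScale_mp n c₁⁻¹ (l.toReal⁻¹)⁻¹ (inv_ne_zero hc₁pos.ne')
      (inv_ne_zero hc₂pos.ne') (by
        rw [abs_inv, abs_inv, abs_of_pos hc₁pos, abs_of_pos hc₂pos, inv_pow, hc₁n, inv_inv,
          ENNReal.ofReal_inv_of_pos hlpos, hofl, ENNReal.inv_mul_cancel hl0 hlT])
    exact h
  have hγinv : γ⁻¹ ≤ (1/2:ℝ) := by
    have h := mul_inv_cancel₀ hγpos.ne'
    nlinarith [inv_pos.2 hγpos]
  -- main normalization step, uniform in X
  have main : ∀ (X : Set (Sp n)), MeasurableSet X → ENNReal.ofReal (1/2) ≤ volume X →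
      (⨆ x, volume (vslice X x)) ≤ l → l * volume (Prod.fst '' X) ≤ Γ →
      IsNormalized γ (⇑φ '' X) := by
    intro X hX hvX hsl hpr
    have himg : (⇑φ '' X) = (⇑φ.symm) ⁻¹' X :=
      congrFun (Set.image_eq_preimage_of_inverse φ.symm_apply_apply φ.apply_symm_apply) X
    refine ⟨?_, ?_, ?_⟩
    · -- volume lower bound
      rw [himg, hmps.measure_preimage hX.nullMeasurableSet]
      exact le_trans (ENNReal.ofReal_le_ofReal hγinv) hvX
    · -- slices
      refine iSup_le fun x => ?_
      have hslice_eq : vslice (⇑φ '' X) x = l.toReal⁻¹ • (vslice X (c₁⁻¹ • x)) := by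
        rw [himg]
        ext y
        show (⇑φ.symm (x, y)) ∈ X ↔ _
        have happ : ⇑φ.symm (x, y) = (c₁⁻¹ • x, (l.toReal⁻¹)⁻¹ • y) := rfl
        rw [happ, Set.mem_smul_set_iff_inv_smul_mem₀ hc₂pos.ne']
        rfl
      rw [hslice_eq, Measure.addHaar_smul_of_nonneg volume hc₂pos.le,
        Module.finrank_self, pow_one]
      calc ENNReal.ofReal l.toReal⁻¹ * volume (vslice X (c₁⁻¹ • x))
          ≤ ENNReal.ofReal l.toReal⁻¹ * l := by
            gcongr
            exact le_trans (le_iSup (fun x => volume (vslice X x)) _) hsl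
        _ = l⁻¹ * l := by rw [ENNReal.ofReal_inv_of_pos hlpos, hofl]
        _ = 1 := ENNReal.inv_mul_cancel hl0 hlT
        _ ≤ ENNReal.ofReal γ := ENNReal.one_le_ofReal.2 hγ1
    · -- projection
      have hproj_eq : Prod.fst '' (⇑φ '' X) = c₁ • (Prod.fst '' X) := by
        calc Prod.fst '' (⇑φ '' X) = ((c₁ • ·) ∘ Prod.fst) '' X := by
              rw [← Set.image_comp]; rfl
          _ = c₁ • (Prod.fst '' X) := by rw [Set.image_comp]; rfl
      rw [hproj_eq, Measure.addHaar_smul_of_nonneg volume hc₁pos.le,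
        finrank_euclideanSpace_fin, hc₁n, hofl, hγΓ]
      exact hpr
  exact ⟨φ, hmp, main A hA hvA (le_max_left a b) hlp, main B hB hvB (le_max_right a b) hlq⟩
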